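/- For symmetric positive definite matrices A and I, and an invertible matrix J, setting A' = J⁻ᵀ A J⁻¹ and I' = J⁻ᵀ I J⁻¹, the matrix A'^{-1/2} I' A'^{-1/2} is similar to A^{-1/2} I A^{-1/2}, and hence has the same eigenvalues; in particular λ_min(A'^{-1/2} I' A'^{-1/2}) = λ_min(A^{-1/2} I A^{-1/2}). -/

import Mathlib

open Matrix Filter Asymptotics MeasureTheory
open scoped Topology

noncomputable def minEig {d : ℕ} (M : Matrix (Fin d) (Fin d) ℝ) : ℝ := sInf (spectrum ℝ M)

open Classical in
noncomputable def sqrtInv {d : ℕ} (A : Matrix (Fin d) (Fin d) ℝ) : Matrix (Fin d) (Fin d) ℝ :=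
  if h : A.PosSemidef then
    ((h.1.eigenvectorUnitary : Matrix (Fin d) (Fin d) ℝ) *
      diagonal ((↑) ∘ (√·) ∘ h.1.eigenvalues) *
      (star h.1.eigenvectorUnitary : Matrix (Fin d) (Fin d) ℝ))⁻¹ else 0

noncomputable def quadForm {d : ℕ} (M : Matrix (Fin d) (Fin d) ℝ) (v : EuclideanSpace ℝ (Fin d)) : ℝ :=
  (inner ℝ v (Matrix.toEuclideanLin M v) : ℝ)

/-! Write `S = A^{-1/2}` and `S' = A'^{-1/2}`. From `S'⁻² = A' = J⁻ᵀ S⁻² J⁻¹` one gets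
`J⁻¹ S' = S² Jᵀ S'⁻¹`, hence `S' (J⁻ᵀ I J⁻¹) S' = P (S I S) P⁻¹` with `P = S' J⁻ᵀ S⁻¹`. This is
pure algebra in the group of units of the matrix ring, once `sqrtInv A` is identified with the
inverse of the square root `cfc Real.sqrt A`. -/

theorem Units.mul_conj_mul_eq_conj {M : Type*} [Monoid M] {s s' k j : Mˣ}
    (h : s'⁻¹ * s'⁻¹ = k * (s⁻¹ * s⁻¹) * j) (x : M) :
    (s' : M) * (k * x * j) * s' = ↑(s' * k * s⁻¹) * (s * x * s) * ↑(s' * k * s⁻¹)⁻¹ := by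
  have hj : j * s' = s * s * k⁻¹ * s'⁻¹ := by
    rw [show j = (k * (s⁻¹ * s⁻¹))⁻¹ * (s'⁻¹ * s'⁻¹) by rw [h]; group]
    simp only [_root_.mul_inv_rev, inv_inv, mul_assoc, inv_mul_cancel, mul_one]
  have hj' : (j : M) * s' = s * s * ↑k⁻¹ * ↑s'⁻¹ := by exact_mod_cast congrArg Units.val hj
  simp only [Units.val_mul, _root_.mul_inv_rev, inv_inv, mul_assoc, hj', Units.inv_mul_cancel_left]

namespace Matrix

theorem PosSemidef.cfc_sqrt_mul_self {n : Type*} [Fintype n] [DecidableEq n]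
    {A : Matrix n n ℝ} (hA : A.PosSemidef) : cfc Real.sqrt A * cfc Real.sqrt A = A := by
  rw [← cfc_mul Real.sqrt Real.sqrt A]
  conv_rhs => rw [← cfc_id' ℝ A hA.1.isSelfAdjoint]
  refine cfc_congr fun x hx => Real.mul_self_sqrt ?_
  obtain ⟨i, rfl⟩ := hA.1.spectrum_real_eq_range_eigenvalues ▸ hx
  exact hA.eigenvalues_nonneg i

variable {d : ℕ} {A : Matrix (Fin d) (Fin d) ℝ}

theorem PosSemidef.sqrtInv_eq_inv_cfc_sqrt (hA : A.PosSemidef) :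
    sqrtInv A = (cfc Real.sqrt A)⁻¹ := by
  rw [sqrtInv, dif_pos hA, hA.1.cfc_eq, IsHermitian.cfc, Unitary.conjStarAlgAut_apply]
  rfl

theorem PosDef.exists_units_sqrtInv (hA : A.PosDef) :
    ∃ s : (Matrix (Fin d) (Fin d) ℝ)ˣ, (s : Matrix (Fin d) (Fin d) ℝ) = sqrtInv A ∧
      ((s⁻¹ * s⁻¹ : (Matrix (Fin d) (Fin d) ℝ)ˣ) : Matrix (Fin d) (Fin d) ℝ) = A := by
  have hsq := hA.posSemidef.cfc_sqrt_mul_self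
  have hR : IsUnit (cfc Real.sqrt A) :=
    ((Commute.refl _).isUnit_mul_iff.mp (hsq.symm ▸ hA.isUnit)).1
  refine ⟨hR.unit⁻¹, ?_, ?_⟩
  · rw [hA.posSemidef.sqrtInv_eq_inv_cfc_sqrt, coe_units_inv, IsUnit.unit_spec]
  · simpa only [inv_inv, Units.val_mul, IsUnit.unit_spec] using hsq

end Matrix

theorem stmt_3_general {d : ℕ} (A I J : Matrix (Fin d) (Fin d) ℝ) (hA : A.PosDef)
    (hJ : IsUnit J) :
    (∃ P : Matrix (Fin d) (Fin d) ℝ, IsUnit P ∧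
        sqrtInv ((J⁻¹)ᵀ * A * J⁻¹) * ((J⁻¹)ᵀ * I * J⁻¹) * sqrtInv ((J⁻¹)ᵀ * A * J⁻¹) =
          P * (sqrtInv A * I * sqrtInv A) * P⁻¹) ∧
      spectrum ℝ (sqrtInv ((J⁻¹)ᵀ * A * J⁻¹) * ((J⁻¹)ᵀ * I * J⁻¹) * sqrtInv ((J⁻¹)ᵀ * A * J⁻¹)) =
        spectrum ℝ (sqrtInv A * I * sqrtInv A) ∧
      minEig (sqrtInv ((J⁻¹)ᵀ * A * J⁻¹) * ((J⁻¹)ᵀ * I * J⁻¹) * sqrtInv ((J⁻¹)ᵀ * A * J⁻¹)) =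
        minEig (sqrtInv A * I * sqrtInv A) := by
  have hJinv : IsUnit J⁻¹ := isUnit_nonsing_inv_iff.mpr hJ
  have hA' : ((J⁻¹)ᵀ * A * J⁻¹).PosDef := by
    simpa only [conjTranspose_eq_transpose_of_trivial] using
      hA.conjTranspose_mul_mul_same (mulVec_injective_iff_isUnit.mpr hJinv)
  obtain ⟨s, hs, hsA⟩ := hA.exists_units_sqrtInv
  obtain ⟨s', hs', hsA'⟩ := hA'.exists_units_sqrtInv
  set k := ((isUnit_transpose _).mpr hJinv).unit
  set j := hJinv.unit
  have htransform : s'⁻¹ * s'⁻¹ = k * (s⁻¹ * s⁻¹) * j := by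
    ext1
    rw [hsA', Units.val_mul, Units.val_mul, hsA]
    rfl
  set P := s' * k * s⁻¹
  have hconj : sqrtInv ((J⁻¹)ᵀ * A * J⁻¹) * ((J⁻¹)ᵀ * I * J⁻¹) * sqrtInv ((J⁻¹)ᵀ * A * J⁻¹) =
      P * (sqrtInv A * I * sqrtInv A) * (P : Matrix (Fin d) (Fin d) ℝ)⁻¹ := by
    rw [← hs, ← hs', ← coe_units_inv]
    exact Units.mul_conj_mul_eq_conj htransform I
  have hspec : spectrum ℝ (sqrtInv ((J⁻¹)ᵀ * A * J⁻¹) * ((J⁻¹)ᵀ * I * J⁻¹) *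
      sqrtInv ((J⁻¹)ᵀ * A * J⁻¹)) = spectrum ℝ (sqrtInv A * I * sqrtInv A) := by
    rw [hconj, ← coe_units_inv, spectrum.units_conjugate]
  exact ⟨⟨P, P.isUnit, hconj⟩, hspec, congrArg sInf hspec⟩

/-- Tensorial transformation of A and I yields a similar matrix, with equal spectrum
and equal smallest eigenvalue. -/
theorem stmt_3 {d : ℕ} (A I J : Matrix (Fin d) (Fin d) ℝ) (hA : A.PosDef) (hI : I.PosDef)
    (hJ : IsUnit J) :
    (∃ P : Matrix (Fin d) (Fin d) ℝ, IsUnit P ∧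
        sqrtInv ((J⁻¹)ᵀ * A * J⁻¹) * ((J⁻¹)ᵀ * I * J⁻¹) * sqrtInv ((J⁻¹)ᵀ * A * J⁻¹) =
          P * (sqrtInv A * I * sqrtInv A) * P⁻¹) ∧
      spectrum ℝ (sqrtInv ((J⁻¹)ᵀ * A * J⁻¹) * ((J⁻¹)ᵀ * I * J⁻¹) * sqrtInv ((J⁻¹)ᵀ * A * J⁻¹)) =
        spectrum ℝ (sqrtInv A * I * sqrtInv A) ∧
      minEig (sqrtInv ((J⁻¹)ᵀ * A * J⁻¹) * ((J⁻¹)ᵀ * I * J⁻¹) * sqrtInv ((J⁻¹)ᵀ * A * J⁻¹)) =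
        minEig (sqrtInv A * I * sqrtInv A) :=
  stmt_3_general A I J hA hJ
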